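/- arXiv:2007.11060 — 3 statements merged into one kernel-verified Lean document; each statement's English description precedes it below -/
import Mathlib

section
/- For all integers 1 ≤ ℓ ≤ j ≤ n, the identity (−1)^ℓ · L*(ℓ,j) = Σ_{k=ℓ+1}^{j} (−1)^{k−1} · L(ℓ,k−1) · L*(k,j) + (−1)^j · L(ℓ,j) holds in R. -/
open scoped BigOperators

/-- `Lser f ℓ j = L(ℓ,j) = Σ_{i_ℓ > i_{ℓ+1} > ⋯ > i_j ≥ 0} f_ℓ(i_ℓ)⋯f_j(i_j)`,
the sum over strictly decreasing tuples of nonnegative integers.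
By convention `Lser f ℓ (ℓ-1) = 1` (empty tuple). -/
noncomputable def Lser {R : Type*} [NormedCommRing R] (f : ℕ → ℕ → R) (ℓ j : ℕ) : R :=
  ∑' g : {g : Fin (j + 1 - ℓ) → ℕ // StrictAnti g},
    ∏ m : Fin (j + 1 - ℓ), f (ℓ + (m : ℕ)) (g.1 m)

/-- `Lstar f ℓ j = L*(ℓ,j) = Σ_{0 ≤ i_ℓ ≤ i_{ℓ+1} ≤ ⋯ ≤ i_j} f_ℓ(i_ℓ)⋯f_j(i_j)`,
the sum over weakly increasing tuples of nonnegative integers.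
By convention `Lstar f ℓ (ℓ-1) = 1` (empty tuple). -/
noncomputable def Lstar {R : Type*} [NormedCommRing R] (f : ℕ → ℕ → R) (ℓ j : ℕ) : R :=
  ∑' g : {g : Fin (j + 1 - ℓ) → ℕ // Monotone g},
    ∏ m : Fin (j + 1 - ℓ), f (ℓ + (m : ℕ)) (g.1 m)

/-!
Write every term as a series over tuples `g : Fin N → ℕ`, `N = j + 1 - ℓ`, weighted by
`∏ m, f (ℓ + m) (g m)`. Call `g` V-shaped at `p` if it strictly decreases on the positions `< p`
and weakly increases on the positions `≥ p`. Then `L*(ℓ,j)` and `L(ℓ,j)` are the series over the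
tuples V-shaped at `0` and at `N`, and, since in a complete nonarchimedean ring products of series
expand as double series, `L(ℓ,k-1) · L*(k,j)` is the series over the tuples V-shaped at `k - ℓ`.
For a fixed tuple the set of `p ≤ N` at which it is V-shaped is empty or a pair `{q, q + 1}`, so
the alternating sum over `p` vanishes term by term.
-/

open Filter Finset

instance IsUltrametricDist.nonarchimedeanRing {R : Type*} [NormedRing R] [IsUltrametricDist R] :
    NonarchimedeanRing R where
  is_nonarchimedean := NonarchimedeanAddGroup.is_nonarchimedean

theorem summable_fin_prod_of_nonarchimedean {R ι : Type*} [CommRing R] [UniformSpace R]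
    [IsUniformAddGroup R] [NonarchimedeanRing R] :
    ∀ {c : ℕ} {u : Fin c → ι → R}, (∀ m, Summable (u m)) →
      Summable fun g : Fin c → ι => ∏ m, u m (g m)
  | 0, _, _ => .of_finite
  | _ + 1, u, hu => by
    rw [← (Fin.consEquiv fun _ => ι).summable_iff]
    simpa [Function.comp_def, Fin.prod_univ_succ] using
      (hu 0).mul_of_nonarchimedean (summable_fin_prod_of_nonarchimedean fun m => hu m.succ)

def VShapedAt {N : ℕ} (p : ℕ) (g : Fin N → ℕ) : Prop :=
  StrictAntiOn g {x | (x : ℕ) < p} ∧ MonotoneOn g {x | p ≤ (x : ℕ)}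

namespace VShapedAt

variable {N : ℕ} {g : Fin N → ℕ}

theorem zero_iff : VShapedAt 0 g ↔ Monotone g := by
  simp [VShapedAt, monotoneOn_univ, (Set.subsingleton_empty).strictAntiOn]

theorem self_iff : VShapedAt N g ↔ StrictAnti g := by
  have hempty : {x : Fin N | N ≤ (x : ℕ)} = ∅ := by ext x; simp [x.isLt]
  simp [VShapedAt, strictAntiOn_univ, hempty, (Set.subsingleton_empty).monotoneOn]

theorem append_iff {a b : ℕ} {u : Fin a → ℕ} {v : Fin b → ℕ} :
    VShapedAt a (Fin.append u v) ↔ StrictAnti u ∧ Monotone v := by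
  constructor
  · rintro ⟨hdesc, hasc⟩
    refine ⟨fun i j hij => ?_, fun i j hij => ?_⟩
    · simpa using hdesc (show (Fin.castAdd b i : ℕ) < a by simp)
        (show (Fin.castAdd b j : ℕ) < a by simp) hij
    · simpa using hasc (show a ≤ (Fin.natAdd a i : ℕ) by simp)
        (show a ≤ (Fin.natAdd a j : ℕ) by simp) (by simpa using hij)
  · rintro ⟨hu, hv⟩
    refine ⟨fun x hx y hy hxy => ?_, fun x hx y hy hxy => ?_⟩
    · obtain ⟨i, rfl⟩ : ∃ i : Fin a, Fin.castAdd b i = x := ⟨⟨x, hx⟩, rfl⟩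
      obtain ⟨j, rfl⟩ : ∃ j : Fin a, Fin.castAdd b j = y := ⟨⟨y, hy⟩, rfl⟩
      simpa using hu hxy
    · obtain ⟨i, rfl⟩ : ∃ i : Fin b, Fin.natAdd a i = x :=
        ⟨⟨x - a, by simp at hx; omega⟩, Fin.ext (by simp at hx ⊢; omega)⟩
      obtain ⟨j, rfl⟩ : ∃ j : Fin b, Fin.natAdd a j = y :=
        ⟨⟨y - a, by simp at hy; omega⟩, Fin.ext (by simp at hy ⊢; omega)⟩
      simpa using hv (by simpa using hxy)

theorem eq_succ_of_lt {p q : ℕ} (hp : VShapedAt p g) (hq : VShapedAt q g) (hpq : p < q)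
    (hqN : q ≤ N) : q = p + 1 := by
  by_contra hne
  let x : Fin N := ⟨p, by omega⟩
  let y : Fin N := ⟨p + 1, by omega⟩
  have hdesc : g y < g x := hq.1 (show (x : ℕ) < q from hpq) (show p + 1 < q by omega)
    (Fin.mk_lt_mk.2 p.lt_succ_self)
  have hasc : g x ≤ g y := hp.2 (show p ≤ (x : ℕ) from le_rfl) (show p ≤ p + 1 by omega)
    (Fin.mk_le_mk.2 p.le_succ)
  omega

theorem succ_of_forall_lt_not (hN : 0 < N) {q : ℕ} (hq : VShapedAt q g)
    (hmin : ∀ p < q, ¬VShapedAt p g) : q < N ∧ VShapedAt (q + 1) g := by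
  have hasc : MonotoneOn g {x | q + 1 ≤ (x : ℕ)} := hq.2.mono fun x (hx : q + 1 ≤ _) => by
    change q ≤ _; omega
  rcases Nat.eq_zero_or_pos q with rfl | hq0
  · refine ⟨hN, Set.Subsingleton.strictAntiOn g ?_, hasc⟩
    intro x (hx : _ < 0 + 1) y (hy : _ < 0 + 1)
    exact Fin.ext (by omega)
  have hprev := hmin (q - 1) (by omega)
  have hdesc' : StrictAntiOn g {x | (x : ℕ) < q - 1} := hq.1.mono fun x (hx : _ < q - 1) => by
    change _ < q; omega
  have hqN : q < N := by
    by_contra hqN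
    refine hprev ⟨hdesc', Set.Subsingleton.monotoneOn g fun x (hx : q - 1 ≤ _) y
      (hy : q - 1 ≤ _) => Fin.ext (by omega)⟩
  -- `g` is not V-shaped at `q - 1`, so it strictly descends from `q - 1` to `q`.
  let x : Fin N := ⟨q - 1, by omega⟩
  let y : Fin N := ⟨q, hqN⟩
  have hxy : g y < g x := by
    by_contra! hle
    refine hprev ⟨hdesc', fun a (ha : q - 1 ≤ _) b (hb : q - 1 ≤ _) hab => ?_⟩
    rcases Nat.lt_or_ge (a : ℕ) q with ha' | ha'
    · obtain rfl : a = x := Fin.ext (by simp [x]; omega)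
      rcases Nat.lt_or_ge (b : ℕ) q with hb' | hb'
      · obtain rfl : b = x := Fin.ext (by simp [x]; omega)
        exact le_rfl
      · exact hle.trans (hq.2 (show q ≤ q from le_rfl) hb' (Fin.mk_le_mk.2 hb'))
    · exact hq.2 ha' (show q ≤ (b : ℕ) by rw [Fin.le_def] at hab; omega) hab
  refine ⟨hqN, fun a (ha : _ < q + 1) b (hb : _ < q + 1) hab => ?_, hasc⟩
  rcases Nat.lt_or_ge (b : ℕ) q with hb' | hb'
  · exact hq.1 (show (a : ℕ) < q by rw [Fin.lt_def] at hab; omega) hb' hab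
  obtain rfl : b = y := Fin.ext (by simp [y]; omega)
  rcases Nat.lt_or_ge (a : ℕ) (q - 1) with ha' | ha'
  · exact hxy.trans (hq.1 (show (a : ℕ) < q by omega) (show q - 1 < q by omega) ha')
  · obtain rfl : a = x := Fin.ext (by rw [Fin.lt_def] at hab; simp [x, y] at hab ⊢; omega)
    exact hxy

end VShapedAt

theorem sum_neg_one_pow_mul_indicator_vShapedAt {R : Type*} [CommRing R] {N : ℕ} (hN : 0 < N)
    (F : (Fin N → ℕ) → R) (g : Fin N → ℕ) :
    ∑ p ∈ range (N + 1), (-1) ^ p * {g | VShapedAt p g}.indicator F g = 0 := by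
  classical
  simp only [Set.indicator_apply, Set.mem_ofPred_eq, mul_ite, mul_zero]
  rw [← Finset.sum_filter]
  set S := (range (N + 1)).filter (VShapedAt · g)
  rcases S.eq_empty_or_nonempty with hS | hS
  · simp [hS]
  obtain ⟨hqS, hq⟩ := mem_filter.1 (S.min'_mem hS)
  set q := S.min' hS
  have hmin : ∀ p < q, ¬VShapedAt p g := fun p hp hpV =>
    (S.min'_le p (mem_filter.2 ⟨by simp at hqS ⊢; omega, hpV⟩)).not_gt hp
  obtain ⟨hqN, hq1⟩ := hq.succ_of_forall_lt_not hN hmin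
  have hSq : S = {q, q + 1} := by
    ext p
    simp only [S, mem_filter, mem_range, mem_insert, mem_singleton]
    constructor
    · rintro ⟨hp, hpV⟩
      rcases lt_trichotomy p q with h | h | h
      · exact absurd hpV (hmin p h)
      · exact .inl h
      · exact .inr (hq.eq_succ_of_lt hpV h (by omega))
    · rintro (rfl | rfl)
      exacts [⟨by omega, hq⟩, ⟨by omega, hq1⟩]
  rw [hSq, sum_pair (by omega), pow_succ]
  ring

section Series

variable {R : Type*} [NormedCommRing R] (f : ℕ → ℕ → R)

def tupleProd (ℓ : ℕ) {N : ℕ} (g : Fin N → ℕ) : R := ∏ m : Fin N, f (ℓ + m) (g m)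

noncomputable def vShapedSum (ℓ N p : ℕ) : R :=
  ∑' g : Fin N → ℕ, {g | VShapedAt p g}.indicator (tupleProd f ℓ) g

theorem tupleProd_append (ℓ : ℕ) {a b : ℕ} (u : Fin a → ℕ) (v : Fin b → ℕ) :
    tupleProd f ℓ (Fin.append u v) = tupleProd f ℓ u * tupleProd f (ℓ + a) v := by
  simp [tupleProd, Fin.prod_univ_add, add_assoc]

theorem Lstar_eq_vShapedSum (ℓ j : ℕ) : Lstar f ℓ j = vShapedSum f ℓ (j + 1 - ℓ) 0 := by
  simp only [vShapedSum, VShapedAt.zero_iff]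
  exact _root_.tsum_subtype {g | Monotone g} (tupleProd f ℓ)

theorem Lser_eq_vShapedSum (ℓ j : ℕ) : Lser f ℓ j = vShapedSum f ℓ (j + 1 - ℓ) (j + 1 - ℓ) := by
  simp only [vShapedSum, VShapedAt.self_iff]
  exact _root_.tsum_subtype {g | StrictAnti g} (tupleProd f ℓ)

variable [IsUltrametricDist R] [CompleteSpace R] {f}

theorem summable_tupleProd {ℓ N : ℕ}
    (hf : ∀ m < N, Tendsto (fun i => ‖f (ℓ + m) i‖) atTop (nhds 0)) :
    Summable (tupleProd f ℓ : (Fin N → ℕ) → R) :=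
  summable_fin_prod_of_nonarchimedean fun m =>
    NonarchimedeanAddGroup.summable_of_tendsto_cofinite_zero <| by
      rw [Nat.cofinite_eq_atTop, tendsto_zero_iff_norm_tendsto_zero]
      exact hf m m.isLt

theorem vShapedSum_self_mul_vShapedSum_zero {ℓ a b : ℕ}
    (ha : Summable (tupleProd f ℓ : (Fin a → ℕ) → R))
    (hb : Summable (tupleProd f (ℓ + a) : (Fin b → ℕ) → R)) :
    vShapedSum f ℓ a a * vShapedSum f (ℓ + a) b 0 = vShapedSum f ℓ (a + b) a := by
  rw [vShapedSum, vShapedSum, tsum_mul_tsum_of_nonarchimedean (ha.indicator _) (hb.indicator _),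
    vShapedSum, ← (Fin.appendEquiv a b).tsum_eq]
  congr 1
  ext ⟨u, v⟩
  classical
  change _ = {g | VShapedAt a g}.indicator (tupleProd f ℓ) (Fin.append u v)
  simp only [Set.indicator_apply, Set.mem_ofPred_eq, VShapedAt.self_iff, VShapedAt.zero_iff,
    VShapedAt.append_iff, tupleProd_append, ite_zero_mul_ite_zero]

theorem sum_range_neg_one_pow_mul_vShapedSum {ℓ N : ℕ} (hN : 0 < N)
    (h : Summable (tupleProd f ℓ : (Fin N → ℕ) → R)) :
    ∑ p ∈ range (N + 1), (-1) ^ p * vShapedSum f ℓ N p = 0 := by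
  simp only [vShapedSum, ← (h.indicator _).tsum_mul_left]
  rw [← Summable.tsum_finsetSum fun p _ => (h.indicator _).mul_left _]
  simp [sum_neg_one_pow_mul_indicator_vShapedAt hN]

end Series

theorem neg_one_pow_mul_eq_of_sum_range_eq_zero {R : Type*} [CommRing R] {x : ℕ → R} (ℓ M : ℕ)
    (h : ∑ p ∈ range (M + 2), (-1) ^ p * x p = 0) :
    (-1) ^ ℓ * x 0 =
      ∑ k ∈ Icc (ℓ + 1) (ℓ + M), (-1) ^ (k - 1) * x (k - ℓ) + (-1) ^ (ℓ + M) * x (M + 1) := by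
  rw [sum_range_succ, sum_range_succ'] at h
  have hshift : ∑ k ∈ Icc (ℓ + 1) (ℓ + M), (-1) ^ (k - 1) * x (k - ℓ) =
      -((-1) ^ ℓ * ∑ p ∈ range M, (-1) ^ (p + 1) * x (p + 1)) := by
    rw [← Finset.Ico_add_one_right_eq_Icc, sum_Ico_eq_sum_range, mul_sum, ← sum_neg_distrib]
    refine sum_congr (by congr 1; omega) fun p _ => ?_
    rw [show ℓ + 1 + p - 1 = ℓ + p by omega, show ℓ + 1 + p - ℓ = p + 1 by omega]
    ring
  linear_combination (-1) ^ ℓ * h - hshift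

theorem stmt0_general {R : Type*} [NormedCommRing R] [IsUltrametricDist R] [CompleteSpace R]
    (n : ℕ) (f : ℕ → ℕ → R)
    (hf : ∀ m, 1 ≤ m → m ≤ n → Filter.Tendsto (fun i => ‖f m i‖) Filter.atTop (nhds 0))
    (ℓ j : ℕ) (hℓ : 1 ≤ ℓ) (hℓj : ℓ ≤ j) (hj : j ≤ n) :
    (-1 : R) ^ ℓ * Lstar f ℓ j =
      (∑ k ∈ Finset.Icc (ℓ + 1) j,
        (-1 : R) ^ (k - 1) * Lser f ℓ (k - 1) * Lstar f k j)
        + (-1 : R) ^ j * Lser f ℓ j := by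
  obtain ⟨M, rfl⟩ := Nat.exists_eq_add_of_le hℓj
  have hsum : ∀ ℓ' N, ℓ ≤ ℓ' → ℓ' + N ≤ ℓ + M + 1 →
      Summable (tupleProd f ℓ' : (Fin N → ℕ) → R) := fun ℓ' N h₁ h₂ =>
    summable_tupleProd fun m hm => hf _ (by omega) (by omega)
  have hprod : ∀ k ∈ Icc (ℓ + 1) (ℓ + M),
      Lser f ℓ (k - 1) * Lstar f k (ℓ + M) = vShapedSum f ℓ (M + 1) (k - ℓ) := by
    intro k hk
    rw [mem_Icc] at hk
    obtain ⟨a, rfl⟩ := Nat.exists_eq_add_of_le (Nat.le_of_succ_le hk.1)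
    rw [Lser_eq_vShapedSum, Lstar_eq_vShapedSum, show ℓ + a - 1 + 1 - ℓ = a by omega,
      show ℓ + M + 1 - (ℓ + a) = M + 1 - a by omega,
      vShapedSum_self_mul_vShapedSum_zero (hsum _ _ le_rfl (by omega))
        (hsum _ _ (by omega) (by omega)),
      show a + (M + 1 - a) = M + 1 by omega, Nat.add_sub_cancel_left]
  rw [Lstar_eq_vShapedSum, Lser_eq_vShapedSum, show ℓ + M + 1 - ℓ = M + 1 by omega,
    sum_congr rfl fun k hk => by rw [mul_assoc, hprod k hk]]
  exact neg_one_pow_mul_eq_of_sum_range_eq_zero ℓ M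
    (sum_range_neg_one_pow_mul_vShapedSum M.succ_pos (hsum ℓ (M + 1) le_rfl le_rfl))

/-- For all integers `1 ≤ ℓ ≤ j ≤ n`, the identity
`(−1)^ℓ · L*(ℓ,j) = Σ_{k=ℓ+1}^{j} (−1)^{k−1} · L(ℓ,k−1) · L*(k,j) + (−1)^j · L(ℓ,j)`
holds in the complete nonarchimedean normed commutative ring `R`. -/
theorem stmt0 {R : Type*} [NormedCommRing R] [IsUltrametricDist R] [CompleteSpace R]
    (n : ℕ) (hn : 1 ≤ n) (f : ℕ → ℕ → R)
    (hf : ∀ m, 1 ≤ m → m ≤ n → Filter.Tendsto (fun i => ‖f m i‖) Filter.atTop (nhds 0))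
    (ℓ j : ℕ) (hℓ : 1 ≤ ℓ) (hℓj : ℓ ≤ j) (hj : j ≤ n) :
    (-1 : R) ^ ℓ * Lstar f ℓ j =
      (∑ k ∈ Finset.Icc (ℓ + 1) j,
        (-1 : R) ^ (k - 1) * Lser f ℓ (k - 1) * Lstar f k j)
        + (-1 : R) ^ j * Lser f ℓ j :=
  stmt0_general n f hf ℓ j hℓ hℓj hj
end

section
/- For all integers 1 ≤ ℓ ≤ j ≤ n, the identity τ^{−1}(L*(ℓ,j)) = Σ_{k=ℓ}^{j+1} L*(k,j) · τ^{−1}(q_ℓ · q_{ℓ+1} ⋯ q_{k−1}) · (c·ω)^{s_ℓ + s_{ℓ+1} + ⋯ + s_{k−1}} holds in R, where for k = ℓ the product q_ℓ⋯q_{k−1} and the exponent sum are empty (the term is L*(ℓ,j)), and for k = j+1 one has L*(j+1,j) = 1. (This is the paper's Lemma stating 𝔏*(s_{j−1},…,s_ℓ)^{(−1)} = 𝔏*(s_{j−1},…,s_ℓ) + 𝔏*(s_{j−1},…,s_{ℓ+1})·Q_ℓ^{(−1)}·[(t−θ)Ω]^{s_ℓ} + ⋯ + Q_ℓ^{(−1)}⋯Q_{j−1}^{(−1)}·[(t−θ)Ω]^{s_ℓ+⋯+s_{j−1}},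 derived from Ψ^{(−1)} = ΦΨ.) -/
open scoped BigOperators

/-!
Order the weakly increasing tuples `i_ℓ ≤ ⋯ ≤ i_j` by whether `i_ℓ = 0`. Those with `i_ℓ = 0`
contribute `f_ℓ(0) · L*(ℓ+1,j)`; the others are the shifts `i ↦ i + 1` of all tuples, and since
`f_m(i+1) = τ(f_m(i))` they contribute `τ(L*(ℓ,j))`. Applying `τ⁻¹` to
`L*(ℓ,j) = f_ℓ(0) · L*(ℓ+1,j) + τ(L*(ℓ,j))` gives the first-order recurrence
`τ⁻¹ L*(ℓ,j) = L*(ℓ,j) + τ⁻¹(f_ℓ(0)) · τ⁻¹ L*(ℓ+1,j)`, with `τ⁻¹(f_ℓ(0)) = τ⁻¹(q_ℓ)(cω)^{s_ℓ}`,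
and unrolling it from `ℓ` up to `L*(j+1,j) = 1` is the claimed identity.
-/

open Filter Topology Finset

theorem eq_sum_Icc_mul_prod_Ico_of_eq_add_mul {R : Type*} [CommSemiring R] (y L u : ℕ → R)
    {ℓ j : ℕ} (hℓj : ℓ ≤ j + 1) (hrec : ∀ k, ℓ ≤ k → k ≤ j → y k = L k + u k * y (k + 1))
    (hend : y (j + 1) = L (j + 1)) :
    y ℓ = ∑ k ∈ Icc ℓ (j + 1), L k * ∏ m ∈ Ico ℓ k, u m := by
  induction hℓj using Nat.decreasingInduction with
  | self => simp [hend]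
  | of_succ i hi ih =>
    rw [hrec i le_rfl (by omega), ih fun k hk => hrec k (by omega), mul_sum,
      ← insert_Icc_add_one_left_eq_Icc (by omega : i ≤ j + 1), sum_insert (by simp), Ico_self,
      prod_empty, mul_one]
    congr 1
    refine sum_congr rfl fun k hk => ?_
    rw [prod_eq_prod_Ico_succ_bot (show i < k by grind)]
    ring

section MonotoneTuples

variable {R : Type*}

def monoProd [CommMonoid R] (F : ℕ → ℕ → R) (a k : ℕ) (g : {g : Fin k → ℕ // Monotone g}) : R :=
  ∏ m : Fin k, F (a + m) (g.1 m)

/-- Indexed by the length `k` of the tuples rather than by their last index, which avoids the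
truncated subtraction `j + 1 - ℓ` of `Lstar`. -/
noncomputable def monoSum [CommSemiring R] [TopologicalSpace R] (F : ℕ → ℕ → R) (a k : ℕ) : R :=
  ∑' g, monoProd F a k g

theorem Lstar_eq_monoSum [NormedCommRing R] (F : ℕ → ℕ → R) (ℓ j : ℕ) :
    Lstar F ℓ j = monoSum F ℓ (j + 1 - ℓ) := rfl

theorem monotone_cons_zero {N : ℕ} {g : Fin N → ℕ} (hg : Monotone g) :
    Monotone (Fin.cons 0 g : Fin (N + 1) → ℕ) :=
  monotone_iff_forall_lt.2 <|
    (Fin.liftFun_cons (· ≤ ·)).2 ⟨fun _ => Nat.zero_le _, monotone_iff_forall_lt.1 hg⟩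

def monoConsZeroEquiv (N : ℕ) :
    {g : Fin N → ℕ // Monotone g} ≃ {g : {g : Fin (N + 1) → ℕ // Monotone g} // g.1 0 = 0} where
  toFun g := ⟨⟨Fin.cons 0 g.1, monotone_cons_zero g.2⟩, rfl⟩
  invFun g := ⟨Fin.tail g.1.1, g.1.2.comp Fin.strictMono_succ.monotone⟩
  left_inv _ := rfl
  right_inv g := by
    ext m : 3
    exact Fin.cases g.2.symm (fun _ => rfl) m

def monoSuccEquiv (N : ℕ) :
    {g : Fin (N + 1) → ℕ // Monotone g} ≃
      {g : {g : Fin (N + 1) → ℕ // Monotone g} // ¬g.1 0 = 0} where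
  toFun g := ⟨⟨g.1 + 1, g.2.add_const 1⟩, Nat.succ_ne_zero _⟩
  invFun g := ⟨g.1.1 - 1, fun _ _ h => Nat.sub_le_sub_right (g.1.2 h) 1⟩
  left_inv g := by ext; simp
  right_inv g := by
    ext m : 3
    have hpos : 1 ≤ g.1.1 m := (Nat.one_le_iff_ne_zero.2 g.2).trans (g.1.2 (Fin.zero_le m))
    exact Nat.sub_add_cancel hpos

theorem monoProd_cons_zero [CommMonoid R] (F : ℕ → ℕ → R) (a N : ℕ)
    (g : {g : Fin N → ℕ // Monotone g}) :
    monoProd F a (N + 1) (monoConsZeroEquiv N g).1 = F a 0 * monoProd F (a + 1) N g := by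
  simp only [monoProd, monoConsZeroEquiv, Fin.prod_univ_succ, Fin.val_zero,
    Fin.val_succ, Nat.add_zero, Nat.add_right_comm a]
  rfl

theorem monoSum_zero [CommSemiring R] [TopologicalSpace R] (F : ℕ → ℕ → R) (a : ℕ) :
    monoSum F a 0 = 1 := by
  have : Unique {g : Fin 0 → ℕ // Monotone g} :=
    ⟨⟨⟨finZeroElim, fun x => x.elim0⟩⟩, fun g => Subtype.ext (funext fun x => x.elim0)⟩
  simp [monoSum, monoProd]

theorem map_monoSum [CommSemiring R] [TopologicalSpace R] {S G : Type*} [CommSemiring S]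
    [TopologicalSpace S] [T2Space S] [FunLike G R S] [RingHomClass G R S] (φ : G)
    (hφ : Continuous φ) {F : ℕ → ℕ → R} {a k : ℕ} (hF : Summable (monoProd F a k)) :
    φ (monoSum F a k) = monoSum (fun m i => φ (F m i)) a k :=
  (hF.map_tsum φ hφ).trans (tsum_congr fun _ => map_prod φ _ _)

theorem monoSum_succ [CommSemiring R] [TopologicalSpace R] [IsTopologicalSemiring R] [T2Space R]
    (F : ℕ → ℕ → R) (a N : ℕ) (hcons : Summable (monoProd F (a + 1) N))
    (hshift : Summable (monoProd (fun m i => F m (i + 1)) a (N + 1))) :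
    monoSum F a (N + 1) =
      F a 0 * monoSum F (a + 1) N + monoSum (fun m i => F m (i + 1)) a (N + 1) := by
  classical
  let e := (Equiv.sumCongr (monoConsZeroEquiv N) (monoSuccEquiv N)).trans
    (Equiv.sumCompl fun g : {g : Fin (N + 1) → ℕ // Monotone g} => g.1 0 = 0)
  have he_inl : ∀ g, monoProd F a (N + 1) (e (Sum.inl g)) = F a 0 * monoProd F (a + 1) N g :=
    monoProd_cons_zero F a N
  have hsum_inl : Summable fun g => monoProd F a (N + 1) (e (Sum.inl g)) := by
    simpa only [he_inl] using hcons.mul_left (F a 0)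
  calc monoSum F a (N + 1) = ∑' g, monoProd F a (N + 1) (e g) := (e.tsum_eq _).symm
    _ = ∑' g, F a 0 * monoProd F (a + 1) N g + monoSum (fun m i => F m (i + 1)) a (N + 1) := by
      rw [Summable.tsum_sum (f := fun g => monoProd F a (N + 1) (e g)) hsum_inl hshift]
      simp only [he_inl]
      rfl
    _ = _ := by rw [hcons.tsum_mul_left]; rfl

theorem tendsto_monoTuple_last_cofinite_atTop (K : ℕ) :
    Tendsto (fun g : {g : Fin (K + 1) → ℕ // Monotone g} => g.1 (Fin.last K)) cofinite atTop := by
  refine tendsto_atTop.2 fun M => eventually_cofinite.2 ?_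
  have hbox : (Set.univ.pi fun _ : Fin (K + 1) => Set.Iio M).Finite :=
    Set.Finite.pi fun _ => Set.finite_Iio M
  refine (hbox.preimage Subtype.val_injective.injOn).subset fun g hg m _ => ?_
  exact (g.2 (Fin.le_last m)).trans_lt (not_le.1 hg)

theorem summable_monoProd [NormedCommRing R] [IsUltrametricDist R] [CompleteSpace R]
    (F : ℕ → ℕ → R) (a k : ℕ) (hF : ∀ m < k, Tendsto (fun i => ‖F (a + m) i‖) atTop (𝓝 0)) :
    Summable (monoProd F a k) := by
  cases k with
  | zero => exact Summable.of_finite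
  | succ K =>
    apply NonarchimedeanAddGroup.summable_of_tendsto_cofinite_zero
    have hbdd : ∀ m : Fin K, ∃ C, ∀ i, ‖F (a + m) i‖ ≤ C := fun m =>
      let ⟨C, hC⟩ := (hF m (by omega)).bddAbove_range
      ⟨C, fun i => hC ⟨i, rfl⟩⟩
    choose C hC using hbdd
    have hlast := ((hF K (by omega)).comp (tendsto_monoTuple_last_cofinite_atTop K)).const_mul
      (∏ m, C m)
    rw [mul_zero] at hlast
    refine squeeze_zero_norm (fun g => ?_) hlast
    calc ‖monoProd F a (K + 1) g‖ ≤ ∏ m : Fin (K + 1), ‖F (a + m) (g.1 m)‖ :=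
          Finset.norm_prod_le' _ univ_nonempty _
      _ = (∏ m : Fin K, ‖F (a + m) (g.1 m.castSucc)‖) * ‖F (a + K) (g.1 (Fin.last K))‖ := by
          rw [Fin.prod_univ_castSucc]; rfl
      _ ≤ (∏ m, C m) * ‖F (a + K) (g.1 (Fin.last K))‖ := by
          gcongr with m
          exact hC m _

end MonotoneTuples

theorem symm_Lstar_iterate_eq_add_mul {R : Type*} [NormedCommRing R] [IsUltrametricDist R]
    [CompleteSpace R]
    (τ : R ≃+* R) (hτ : ∀ x, ‖τ x‖ = ‖x‖) (x : ℕ → R) {ℓ j : ℕ} (hℓj : ℓ ≤ j)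
    (hx : ∀ m, ℓ ≤ m → m ≤ j → Tendsto (fun i => ‖(⇑τ)^[i] (x m)‖) atTop (𝓝 0)) :
    τ.symm (Lstar (fun m i => (⇑τ)^[i] (x m)) ℓ j) =
      Lstar (fun m i => (⇑τ)^[i] (x m)) ℓ j +
        τ.symm (x ℓ) * τ.symm (Lstar (fun m i => (⇑τ)^[i] (x m)) (ℓ + 1) j) := by
  set F : ℕ → ℕ → R := fun m i => (⇑τ)^[i] (x m)
  have hcont : Continuous τ := (AddMonoidHomClass.isometry_of_norm τ hτ).continuous
  have hshift : (fun m i => F m (i + 1)) = fun m i => τ (F m i) :=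
    funext₂ fun m i => Function.iterate_succ_apply' τ i (x m)
  obtain ⟨N, hN, hN'⟩ : ∃ N, j + 1 - ℓ = N + 1 ∧ j + 1 - (ℓ + 1) = N := ⟨j - ℓ, by omega, by omega⟩
  have hsum : Summable (monoProd F ℓ (N + 1)) :=
    summable_monoProd F ℓ _ fun m hm => hx (ℓ + m) (by omega) (by omega)
  have hsum' : Summable (monoProd F (ℓ + 1) N) :=
    summable_monoProd F (ℓ + 1) _ fun m hm => by
      simpa only [add_right_comm ℓ 1 m] using hx (ℓ + m + 1) (by omega) (by omega)
  have hsplit := monoSum_succ F ℓ N hsum' <| by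
    rw [hshift]
    exact (hsum.map τ hcont).congr fun _ => map_prod τ _ _
  rw [hshift, ← map_monoSum τ hcont hsum] at hsplit
  rw [Lstar_eq_monoSum, Lstar_eq_monoSum, hN, hN']
  calc τ.symm (monoSum F ℓ (N + 1))
      = τ.symm (F ℓ 0 * monoSum F (ℓ + 1) N + τ (monoSum F ℓ (N + 1))) := by rw [← hsplit]
    _ = _ := by rw [map_add, map_mul, τ.symm_apply_apply, add_comm]; rfl

theorem stmt3_general {R : Type*} [NormedCommRing R] [IsUltrametricDist R] [CompleteSpace R]
    (τ : R ≃+* R) (hτ : ∀ x, ‖τ x‖ = ‖x‖)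
    (n : ℕ) (ω c : R) (q : ℕ → R) (s : ℕ → ℕ)
    (hω : τ.symm ω = c * ω)
    (hf : ∀ m, 1 ≤ m → m ≤ n →
      Filter.Tendsto (fun i => ‖(⇑τ)^[i] (ω ^ s m * q m)‖) Filter.atTop (nhds 0))
    (ℓ j : ℕ) (hℓ : 1 ≤ ℓ) (hℓj : ℓ ≤ j) (hj : j ≤ n) :
    τ.symm (Lstar (fun m i => (⇑τ)^[i] (ω ^ s m * q m)) ℓ j) =
      ∑ k ∈ Finset.Icc ℓ (j + 1),
        Lstar (fun m i => (⇑τ)^[i] (ω ^ s m * q m)) k j *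
          τ.symm (∏ m ∈ Finset.Ico ℓ k, q m) *
          (c * ω) ^ (∑ m ∈ Finset.Ico ℓ k, s m) := by
  set L := fun k => Lstar (fun m i => (⇑τ)^[i] (ω ^ s m * q m)) k j
  have hrec : ∀ k, ℓ ≤ k → k ≤ j →
      τ.symm (L k) = L k + τ.symm (ω ^ s k * q k) * τ.symm (L (k + 1)) := fun k hk hkj =>
    symm_Lstar_iterate_eq_add_mul τ hτ _ hkj fun m hm hmj => hf m (by omega) (by omega)
  have hend : τ.symm (L (j + 1)) = L (j + 1) := by
    simp only [L, Lstar_eq_monoSum, Nat.sub_self, monoSum_zero, map_one]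
  rw [eq_sum_Icc_mul_prod_Ico_of_eq_add_mul _ L _ (by omega) hrec hend]
  refine sum_congr rfl fun k _ => ?_
  simp only [map_prod, map_mul, map_pow, hω, prod_mul_distrib, prod_pow_eq_pow_sum]
  ring

/-- Let `τ` be an isometric ring automorphism of the complete nonarchimedean normed
commutative ring `R`, let `ω, c, q_1, …, q_n ∈ R` with `τ⁻¹(ω) = c·ω`, let
`s_1, …, s_n ≥ 1`, and set `f_m(i) := τ^i(ω^{s_m}·q_m)`, assuming `‖f_m(i)‖ → 0`.
Then for all `1 ≤ ℓ ≤ j ≤ n`: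
`τ⁻¹(L*(ℓ,j)) = Σ_{k=ℓ}^{j+1} L*(k,j) · τ⁻¹(q_ℓ⋯q_{k−1}) · (c·ω)^{s_ℓ+⋯+s_{k−1}}`,
where for `k = ℓ` the product and exponent sum are empty, and `L*(j+1,j) = 1`. -/
theorem stmt3 {R : Type*} [NormedCommRing R] [IsUltrametricDist R] [CompleteSpace R]
    (τ : R ≃+* R) (hτ : ∀ x, ‖τ x‖ = ‖x‖)
    (n : ℕ) (hn : 1 ≤ n) (ω c : R) (q : ℕ → R) (s : ℕ → ℕ)
    (hs : ∀ m, 1 ≤ m → m ≤ n → 1 ≤ s m)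
    (hω : τ.symm ω = c * ω)
    (hf : ∀ m, 1 ≤ m → m ≤ n →
      Filter.Tendsto (fun i => ‖(⇑τ)^[i] (ω ^ s m * q m)‖) Filter.atTop (nhds 0))
    (ℓ j : ℕ) (hℓ : 1 ≤ ℓ) (hℓj : ℓ ≤ j) (hj : j ≤ n) :
    τ.symm (Lstar (fun m i => (⇑τ)^[i] (ω ^ s m * q m)) ℓ j) =
      ∑ k ∈ Finset.Icc ℓ (j + 1),
        Lstar (fun m i => (⇑τ)^[i] (ω ^ s m * q m)) k j *
          τ.symm (∏ m ∈ Finset.Ico ℓ k, q m) *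
          (c * ω) ^ (∑ m ∈ Finset.Ico ℓ k, s m) :=
  stmt3_general τ hτ n ω c q s hω hf ℓ j hℓ hℓj hj
end

section
/- For every integer n with q+1 ≤ n ≤ q², setting k := ⌊(n−1)/q⌋, the Anderson–Thakur polynomial satisfies H_n(t) = Σ_{j=0}^{k} C(n−jq+j−1, j) · (t^q − t)^{k−j} · (t^q − θ^q)^j, an identity in 𝔽_q[θ,t], where C(n−jq+j−1, j) denotes the binomial coefficient reduced modulo the characteristic p. -/
/-! For `n ≤ q²` only the first two terms of `Σ (γ_j/D_j) x^{q^j}` affect the coefficient of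
`x^n`, namely `x + b x^q` with `b = γ₁/D₁ = (t^q - θ^q)/(t^q - t)`, and `Γ_n = D₁^k`.
Expanding `1/(1 - x - b x^q) = Σ_j b^j x^{qj} (1 - x)^{-(j+1)}` gives the coefficient
`Σ_j C(m - jq + j, j) b^j` of `x^m`, and the factor `D₁^k` clears the denominators of `b^j`. -/

open scoped BigOperators

/-- The rational function field `F(θ,t)`, realized as the fraction field of
`F[θ][t] =` `Polynomial (Polynomial F)` (inner variable `θ`, outer variable `t`). -/
noncomputable abbrev Kf (F : Type*) [Field F] : Type _ :=
  FractionRing (Polynomial (Polynomial F))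

/-- The element `θ` of `F(θ,t)`. -/
noncomputable def θK (F : Type*) [Field F] : Kf F :=
  algebraMap (Polynomial (Polynomial F)) (Kf F) (Polynomial.C Polynomial.X)

/-- The element `t` of `F(θ,t)`. -/
noncomputable def tK (F : Type*) [Field F] : Kf F :=
  algebraMap (Polynomial (Polynomial F)) (Kf F) Polynomial.X

/-- `Dd F q u k = D_k = ∏_{ℓ=1}^{k} [ℓ]^{q^{k−ℓ}}` where `[ℓ] = u^{q^ℓ} − u`
(in the paper `u = θ`; swapping `θ` and `t` corresponds to `u = t`). `D_0 = 1`. -/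
noncomputable def Dd (F : Type*) [Field F] (q : ℕ) (u : Kf F) (k : ℕ) : Kf F :=
  ∏ l ∈ Finset.Icc 1 k, (u ^ q ^ l - u) ^ q ^ (k - l)

/-- `Gam F q u n = Γ_n = ∏_{j≥0} D_j^{n_j}` where `n−1 = Σ_j n_j q^j` is the base-`q`
expansion (so `n_j = (n−1)/q^j mod q`); all digits with `j ≥ n` vanish since `q ≥ 2`. -/
noncomputable def Gam (F : Type*) [Field F] (q : ℕ) (u : Kf F) (n : ℕ) : Kf F :=
  ∏ j ∈ Finset.range n, Dd F q u j ^ ((n - 1) / q ^ j % q)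

/-- `gammaAT F q u v j = γ_j = ∏_{ℓ=1}^{j} (u^{q^j} − v^{q^ℓ})`
(in the paper `u = θ`, `v = t`). `γ_0 = 1`. -/
noncomputable def gammaAT (F : Type*) [Field F] (q : ℕ) (u v : Kf F) (j : ℕ) : Kf F :=
  ∏ l ∈ Finset.Icc 1 j, (u ^ q ^ j - v ^ q ^ l)

/-- The power series `Σ_{j≥0} (γ_j/D_j) x^{q^j}`: its coefficient at `m` is
`γ_j/D_j` if `m = q^j` (for `q ≥ 2` such `j` is unique, namely `j = Nat.log q m`),
and `0` otherwise. -/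
noncomputable def SserAT (F : Type*) [Field F] (q : ℕ) (u v : Kf F) : PowerSeries (Kf F) :=
  PowerSeries.mk fun m =>
    if q ^ Nat.log q m = m then gammaAT F q u v (Nat.log q m) / Dd F q u (Nat.log q m)
    else 0

/-- `alphaAT F q u v n = Γ_n ·` (coefficient of `x^n` in `x·(1 − Σ_{j≥0}(γ_j/D_j)x^{q^j})⁻¹`).
For `u = θ, v = t` this is the Anderson–Thakur polynomial `α_n`, and for `u = t, v = θ`
it is its image `H_n` under the `𝔽_q`-algebra automorphism interchanging `θ` and `t`. -/
noncomputable def alphaAT (F : Type*) [Field F] (q : ℕ) (u v : Kf F) (n : ℕ) : Kf F :=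
  Gam F q u n *
    PowerSeries.coeff n (PowerSeries.X * (1 - SserAT F q u v)⁻¹)

namespace PowerSeries

variable {K : Type*} [Field K]

theorem coeff_inv_eq_of_X_pow_dvd_mul_sub_one {f g : K⟦X⟧} {N m : ℕ}
    (hf : constantCoeff f ≠ 0) (hfg : X ^ N ∣ f * g - 1) (hm : m < N) :
    coeff m f⁻¹ = coeff m g := by
  have hdiff : f⁻¹ - g = -(f⁻¹ * (f * g - 1)) := by
    rw [mul_sub, ← mul_assoc, PowerSeries.inv_mul_cancel f hf]
    ring
  rw [← sub_eq_zero, ← map_sub, hdiff]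
  exact X_pow_dvd_iff.mp ((hfg.mul_left _).neg_right) m hm

theorem one_sub_X_sub_C_mul_X_pow_mul_sum {R : Type*} [CommRing R] (b : R) (q M : ℕ) :
    (1 - X - C b * X ^ q) *
        ∑ j ∈ Finset.range M, C (b ^ j) * X ^ (q * j) * (invOneSubPow R (j + 1)).val =
      1 - C (b ^ M) * X ^ (q * M) * (invOneSubPow R M).val := by
  set B : ℕ → R⟦X⟧ := fun j => C (b ^ j) * X ^ (q * j) * (invOneSubPow R j).val
  have hstep : ∀ j,
      (1 - X - C b * X ^ q) * (C (b ^ j) * X ^ (q * j) * (invOneSubPow R (j + 1)).val) =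
        B j - B (j + 1) := by
    intro j
    have h := one_sub_pow_mul_invOneSubPow_val_add_eq_invOneSubPow_val R j 1
    simp only [B, ← h, pow_succ, mul_add, map_mul]
    ring
  rw [Finset.mul_sum, Finset.sum_congr rfl fun j _ => hstep j, Finset.sum_range_sub']
  simp [B, invOneSubPow_zero]

theorem coeff_inv_one_sub_eq_sum_choose {S : K⟦X⟧} {b : K} {q M m : ℕ}
    (hS : X ^ (q * M) ∣ S - (X + C b * X ^ q)) (hm : m < q * M) :
    coeff m (1 - S)⁻¹ =
      ∑ j ∈ Finset.range (m / q + 1), ((m - j * q + j).choose j : K) * b ^ j := by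
  have hq : q ≠ 0 := by rintro rfl; simp at hm
  set G := ∑ j ∈ Finset.range M, C (b ^ j) * X ^ (q * j) * (invOneSubPow K (j + 1)).val
  have hS0 : constantCoeff S = 0 := by
    have h := X_pow_dvd_iff.mp hS 0 (by omega)
    simpa [coeff_X_pow, hq] using h
  have hG : X ^ (q * M) ∣ (1 - S) * G - 1 := by
    have hsub : (1 - S) * G - 1 =
        -(C (b ^ M) * X ^ (q * M) * (invOneSubPow K M).val) - (S - (X + C b * X ^ q)) * G := by
      linear_combination one_sub_X_sub_C_mul_X_pow_mul_sum b q M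
    rw [hsub]
    exact dvd_sub ((dvd_mul_left _ _).mul_right _).neg_right (hS.mul_right G)
  rw [coeff_inv_eq_of_X_pow_dvd_mul_sub_one (by simp [hS0]) hG hm]
  have hrange : Finset.range (m / q + 1) = (Finset.range M).filter (fun j => q * j ≤ m) := by
    ext j
    simp only [Finset.mem_range, Finset.mem_filter, Nat.lt_succ_iff,
      Nat.le_div_iff_mul_le (Nat.pos_of_ne_zero hq), mul_comm j q]
    exact ⟨fun hj => ⟨by nlinarith, hj⟩, And.right⟩
  simp only [G, map_sum, mul_assoc, coeff_C_mul, coeff_X_pow_mul',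
    invOneSubPow_val_succ_eq_mk_add_choose, coeff_mk, hrange, Finset.sum_filter]
  refine Finset.sum_congr rfl fun j _ => ?_
  split_ifs with hj
  · rw [mul_comm, show j + (m - q * j) = m - j * q + j by rw [mul_comm]; omega]
  · simp

end PowerSeries

open PowerSeries in
theorem X_pow_dvd_SserAT_sub {F : Type*} [Field F] {q : ℕ} (hq : 1 < q) (u v : Kf F) :
    X ^ (q * q) ∣ SserAT F q u v - (X + C ((u ^ q - v ^ q) / (u ^ q - u)) * X ^ q) := by
  refine X_pow_dvd_iff.mpr fun i hi => ?_
  rw [map_sub, sub_eq_zero, SserAT, coeff_mk]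
  split_ifs with hpow
  · have hlog : Nat.log q i < 2 := by
      rw [← Nat.pow_lt_pow_iff_right hq, hpow, sq]
      exact hi
    interval_cases h : Nat.log q i <;> subst hpow
    · simp [gammaAT, Dd, coeff_X_pow, hq.ne]
    · simp [gammaAT, Dd, coeff_X, hq.ne']
  · have hi1 : i ≠ 1 := by rintro rfl; simp at hpow
    have hiq : i ≠ q := by
      rintro rfl
      exact hpow (by simpa using congrArg (i ^ ·) (Nat.log_pow hq 1))
    simp [coeff_X, coeff_X_pow, hi1, hiq]

theorem Gam_eq_pow_of_le_sq {F : Type*} [Field F] {q n : ℕ} (hq : 1 < q) (hn : n ≤ q ^ 2)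
    (u : Kf F) : Gam F q u n = (u ^ q - u) ^ ((n - 1) / q) := by
  have hlt : n - 1 < q ^ 2 := by
    have : 0 < q ^ 2 := by positivity
    omega
  have hdigit : (n - 1) / q % q = (n - 1) / q :=
    Nat.mod_eq_of_lt (Nat.div_lt_of_lt_mul (by rwa [← sq]))
  rw [Gam, Finset.prod_eq_single 1]
  · simp [Dd, hdigit]
  · intro j _ hj
    rcases Nat.lt_or_ge j 2 with hj2 | hj2
    · interval_cases j
      · simp [Dd]
      · contradiction
    · have : (n - 1) / q ^ j = 0 :=
        Nat.div_eq_of_lt (hlt.trans_le (Nat.pow_le_pow_right (by omega) hj2))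
      simp [this]
  · intro h1
    have : (n - 1) / q = 0 := Nat.div_eq_of_lt (by simp at h1; omega)
    simp [this]

theorem tK_pow_sub_tK_ne_zero (F : Type*) [Field F] {q : ℕ} (hq : 1 < q) :
    tK F ^ q - tK F ≠ 0 := by
  have hpoly : (Polynomial.X ^ q - Polynomial.X : Polynomial F).map Polynomial.C ≠ 0 :=
    (Polynomial.map_ne_zero_iff Polynomial.C_injective).mpr
      (FiniteField.X_pow_card_sub_X_ne_zero F hq)
  have h := (map_ne_zero_iff _ (IsFractionRing.injective _ (Kf F))).mpr hpoly
  simpa [tK] using h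

theorem pow_mul_sum_mul_div_pow {K : Type*} [Field K] {a : K} (ha : a ≠ 0) (b : K) (c : ℕ → K)
    (k : ℕ) :
    a ^ k * ∑ j ∈ Finset.range (k + 1), c j * (b / a) ^ j =
      ∑ j ∈ Finset.range (k + 1), c j * a ^ (k - j) * b ^ j := by
  rw [Finset.mul_sum]
  refine Finset.sum_congr rfl fun j hj => ?_
  rw [div_pow, pow_sub₀ a ha (Nat.lt_succ_iff.mp (Finset.mem_range.mp hj))]
  field_simp

/-- For every integer `n` with `q+1 ≤ n ≤ q²`, setting `k := ⌊(n−1)/q⌋`, the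
Anderson–Thakur polynomial satisfies
`H_n(t) = Σ_{j=0}^{k} C(n−jq+j−1, j) · (t^q − t)^{k−j} · (t^q − θ^q)^j`
in `𝔽_q(θ,t)`, where the binomial coefficient is reduced modulo the characteristic. -/
theorem stmt7 (F : Type*) [Field F] [Fintype F] (n : ℕ)
    (h1 : Fintype.card F + 1 ≤ n) (h2 : n ≤ Fintype.card F ^ 2) :
    alphaAT F (Fintype.card F) (tK F) (θK F) n =
      ∑ j ∈ Finset.range ((n - 1) / Fintype.card F + 1),
        (Nat.choose (n - j * Fintype.card F + j - 1) j : Kf F) *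
          (tK F ^ Fintype.card F - tK F) ^ ((n - 1) / Fintype.card F - j) *
          (tK F ^ Fintype.card F - θK F ^ Fintype.card F) ^ j := by
  set q := Fintype.card F
  have hq : 1 < q := Fintype.one_lt_card
  obtain ⟨m, rfl⟩ : ∃ m, n = m + 1 := ⟨n - 1, by omega⟩
  have hm : m < q * q := by rw [← sq]; omega
  rw [Nat.add_sub_cancel]
  calc alphaAT F q (tK F) (θK F) (m + 1)
      = (tK F ^ q - tK F) ^ (m / q) *
          PowerSeries.coeff m (1 - SserAT F q (tK F) (θK F))⁻¹ := by
        rw [alphaAT, Gam_eq_pow_of_le_sq hq h2, PowerSeries.coeff_succ_X_mul, Nat.add_sub_cancel]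
    _ = (tK F ^ q - tK F) ^ (m / q) * ∑ j ∈ Finset.range (m / q + 1),
          ((m - j * q + j).choose j : Kf F) *
            ((tK F ^ q - θK F ^ q) / (tK F ^ q - tK F)) ^ j := by
        rw [PowerSeries.coeff_inv_one_sub_eq_sum_choose
          (X_pow_dvd_SserAT_sub hq (tK F) (θK F)) hm]
    _ = _ := by
        rw [pow_mul_sum_mul_div_pow (tK_pow_sub_tK_ne_zero F hq)]
        refine Finset.sum_congr rfl fun j hj => ?_
        have hjm : j * q ≤ m := (Nat.le_div_iff_mul_le (by omega)).mp
          (Nat.lt_succ_iff.mp (Finset.mem_range.mp hj))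
        rw [show m + 1 - j * q + j - 1 = m - j * q + j by omega]
end
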